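/- arXiv:1705.09362 — 7 statements merged into one kernel-verified Lean document; each statement's English description precedes it below -/
import Mathlib

section
/- Let A, M : ℝ → ℝ^{n×n} be continuous on [t₀, T_f], and let Φ : ℝ × ℝ → ℝ^{n×n} be a transition matrix for A, i.e. for every τ the map t ↦ Φ(t,τ) is differentiable with ∂ₜΦ(t,τ) = A(t)·Φ(t,τ) and Φ(τ,τ) = I, and (t,τ) ↦ Φ(t,τ) and (t,τ) ↦ ∂ₜΦ(t,τ) are continuous on [t₀,T_f]². Then the function X(t) = Φ(t,t₀) X₀ Φ(t,t₀)ᵀ + ∫_{t₀}^t Φ(t,τ) M(τ) Φ(t,τ)ᵀ dτ is differentiable on [t₀,T_f] and satisfies Ẋ(t) = A(t) X(t) + X(t) A(t)ᵀ + M(t) with X(t₀) = X₀. -/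
/-!
Both terms of `X` are differentiated by the product rule, which gives
`d/dt (Φ B Φᵀ) = A (Φ B Φᵀ) + (Φ B Φᵀ) Aᵀ` whenever `∂ₜΦ = A Φ`. For the integral term, whose
limit and integrand both depend on `t`, the Leibniz rule adds the boundary value
`Φ(t,t) M(t) Φ(t,t)ᵀ = M(t)`, and the linear map `Y ↦ A Y + Y Aᵀ` commutes with the integral.
The Leibniz rule itself follows from the uniform continuity of the integrand and of its
`t`-derivative on the compact square `[t₀, T_f]²`.
-/

open Matrix Set intervalIntegral

attribute [local instance] Matrix.normedAddCommGroup Matrix.normedSpace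

open MeasureTheory

section Leibniz

variable {E : Type*} [NormedAddCommGroup E] [NormedSpace ℝ E] {a b : ℝ} {f g : ℝ → ℝ → E}

theorem norm_sub_sub_smul_le_of_hasDerivWithinAt {φ φ' : ℝ → E} {s : Set ℝ} (hs : Convex ℝ s)
    (hφ : ∀ y ∈ s, HasDerivWithinAt φ (φ' y) s y) {v : E} {C : ℝ}
    (hC : ∀ y ∈ s, ‖φ' y - v‖ ≤ C) {x t : ℝ} (hx : x ∈ s) (ht : t ∈ s) :
    ‖φ x - φ t - (x - t) • v‖ ≤ C * |x - t| := by
  have h := hs.norm_image_sub_le_of_norm_hasDerivWithin_le (f := fun y => φ y - y • v)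
    (fun y hy => by simpa using (hφ y hy).fun_sub ((hasDerivWithinAt_id y s).smul_const v))
    hC ht hx
  rw [sub_smul, ← Real.norm_eq_abs]
  convert h using 2
  abel

theorem hasDerivWithinAt_intervalIntegral_param
    (hf : ∀ x ∈ Icc a b, ContinuousOn (f x) (Icc a b))
    (hg : ContinuousOn (Function.uncurry g) (Icc a b ×ˢ Icc a b))
    (hd : ∀ τ ∈ Icc a b, ∀ x ∈ Icc a b, HasDerivWithinAt (f · τ) (g x τ) (Icc a b) x)
    {c t : ℝ} (hc : c ∈ Icc a b) (ht : t ∈ Icc a b) :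
    HasDerivWithinAt (fun x => ∫ τ in a..c, f x τ) (∫ τ in a..c, g t τ) (Icc a b) t := by
  have hac : uIcc a c ⊆ Icc a b := uIcc_subset_Icc ⟨le_rfl, ht.1.trans ht.2⟩ hc
  have hint : ∀ x ∈ Icc a b, IntervalIntegrable (f x) volume a c := fun x hx =>
    ((hf x hx).mono hac).intervalIntegrable
  have hgint : IntervalIntegrable (g t) volume a c :=
    ((hg.uncurry_left t ht).mono hac).intervalIntegrable
  rw [hasDerivWithinAt_iff_isLittleO, Asymptotics.isLittleO_iff]
  intro ε hε
  obtain ⟨ε', hε', rfl⟩ : ∃ ε', 0 < ε' ∧ ε' * (b - a + 1) = ε :=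
    ⟨ε / (b - a + 1), div_pos hε (by linarith [ht.1.trans ht.2]),
      div_mul_cancel₀ _ (by linarith [ht.1.trans ht.2])⟩
  obtain ⟨δ, hδ, hgδ⟩ := Metric.uniformContinuousOn_iff_le.1
    ((isCompact_Icc.prod isCompact_Icc).uniformContinuousOn_of_continuous hg) ε' hε'
  filter_upwards [self_mem_nhdsWithin,
    mem_nhdsWithin_of_mem_nhds (Metric.ball_mem_nhds t hδ)] with x hx hxt
  have hxt' : |x - t| < δ := hxt
  have hpoint : ∀ τ ∈ Icc a b, ‖f x τ - f t τ - (x - t) • g t τ‖ ≤ ε' * |x - t| := by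
    intro τ hτ
    have hsub : uIcc t x ⊆ Icc a b := uIcc_subset_Icc ht hx
    refine norm_sub_sub_smul_le_of_hasDerivWithinAt (convex_uIcc t x)
      (fun y hy => (hd τ hτ y (hsub hy)).mono hsub) (fun y hy => ?_) right_mem_uIcc left_mem_uIcc
    rw [← dist_eq_norm]
    refine hgδ (y, τ) ⟨hsub hy, hτ⟩ (t, τ) ⟨ht, hτ⟩ ?_
    rw [Prod.dist_eq, dist_self, max_eq_left dist_nonneg, Real.dist_eq]
    exact (abs_sub_left_of_mem_uIcc hy).trans hxt'.le
  have hca : |c - a| ≤ b - a + 1 := by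
    rw [abs_of_nonneg (by linarith [hc.1])]
    linarith [hc.2]
  calc ‖(∫ τ in a..c, f x τ) - (∫ τ in a..c, f t τ) - (x - t) • ∫ τ in a..c, g t τ‖
      = ‖∫ τ in a..c, (f x τ - f t τ - (x - t) • g t τ)‖ := by
        rw [integral_sub (f := fun τ => f x τ - f t τ) (g := fun τ => (x - t) • g t τ)
          ((hint x hx).sub (hint t ht)) (hgint.smul (x - t)),
          integral_sub (hint x hx) (hint t ht), intervalIntegral.integral_smul]
    _ ≤ ε' * |x - t| * |c - a| :=
        norm_integral_le_of_norm_le_const fun τ hτ => hpoint τ (hac (uIoc_subset_uIcc hτ))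
    _ ≤ ε' * |x - t| * (b - a + 1) := by gcongr
    _ = ε' * (b - a + 1) * ‖x - t‖ := by rw [Real.norm_eq_abs, mul_right_comm]

theorem hasDerivWithinAt_intervalIntegral_param_upper [CompleteSpace E]
    (hf : ContinuousOn (Function.uncurry f) (Icc a b ×ˢ Icc a b)) {t : ℝ} (ht : t ∈ Icc a b) :
    HasDerivWithinAt (fun x => ∫ τ in t..x, f x τ) (f t t) (Icc a b) t := by
  rw [hasDerivWithinAt_iff_isLittleO, Asymptotics.isLittleO_iff]
  intro ε hε
  obtain ⟨δ, hδ, hfδ⟩ := Metric.continuousWithinAt_iff.1 (hf (t, t) ⟨ht, ht⟩) ε hε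
  filter_upwards [self_mem_nhdsWithin,
    mem_nhdsWithin_of_mem_nhds (Metric.ball_mem_nhds t hδ)] with x hx hxt
  have hxt' : |x - t| < δ := hxt
  have hsub : uIcc t x ⊆ Icc a b := uIcc_subset_Icc ht hx
  have hint : IntervalIntegrable (f x) volume t x :=
    ((hf.uncurry_left x hx).mono hsub).intervalIntegrable
  calc ‖(∫ τ in t..x, f x τ) - (∫ τ in t..t, f t τ) - (x - t) • f t t‖
      = ‖∫ τ in t..x, (f x τ - f t t)‖ := by
        rw [integral_sub hint intervalIntegrable_const, integral_same,
          intervalIntegral.integral_const, sub_zero]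
    _ ≤ ε * |x - t| := by
        refine norm_integral_le_of_norm_le_const fun τ hτ => ?_
        have hτ' := uIoc_subset_uIcc hτ
        rw [← dist_eq_norm]
        refine (hfδ (x := (x, τ)) ⟨hx, hsub hτ'⟩ ?_).le
        rw [Prod.dist_eq, Real.dist_eq, Real.dist_eq]
        exact max_lt hxt' ((abs_sub_left_of_mem_uIcc hτ').trans_lt hxt')
    _ = ε * ‖x - t‖ := by rw [Real.norm_eq_abs]

theorem hasDerivWithinAt_intervalIntegral_leibniz [CompleteSpace E]
    (hf : ContinuousOn (Function.uncurry f) (Icc a b ×ˢ Icc a b))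
    (hg : ContinuousOn (Function.uncurry g) (Icc a b ×ˢ Icc a b))
    (hd : ∀ τ ∈ Icc a b, ∀ x ∈ Icc a b, HasDerivWithinAt (f · τ) (g x τ) (Icc a b) x)
    {t : ℝ} (ht : t ∈ Icc a b) :
    HasDerivWithinAt (fun x => ∫ τ in a..x, f x τ) ((∫ τ in a..t, g t τ) + f t t) (Icc a b) t := by
  have ha : a ∈ Icc a b := ⟨le_rfl, ht.1.trans ht.2⟩
  have hint : ∀ x ∈ Icc a b, ∀ c ∈ Icc a b, ∀ d ∈ Icc a b, IntervalIntegrable (f x) volume c d :=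
    fun x hx c hc d hd => ((hf.uncurry_left x hx).mono (uIcc_subset_Icc hc hd)).intervalIntegrable
  refine ((hasDerivWithinAt_intervalIntegral_param (fun x hx => hf.uncurry_left x hx) hg hd ht
    ht).add (hasDerivWithinAt_intervalIntegral_param_upper hf ht)).congr (fun x hx => ?_) ?_
  · exact (integral_add_adjacent_intervals (hint x hx a ha t ht) (hint x hx t ht x hx)).symm
  · simp

end Leibniz

section MatrixCalculus

variable {ι : Type*} [Fintype ι] {u v : ℝ → Matrix ι ι ℝ} {u' v' : Matrix ι ι ℝ}
  {s : Set ℝ} {x : ℝ}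

theorem HasDerivWithinAt.matrix_transpose (hu : HasDerivWithinAt u u' s x) :
    HasDerivWithinAt (fun y => (u y)ᵀ) u'ᵀ s x :=
  hasDerivWithinAt_pi.2 fun i => hasDerivWithinAt_pi.2 fun j =>
    hasDerivWithinAt_pi.1 (hasDerivWithinAt_pi.1 hu j) i

variable [DecidableEq ι]

/- The entrywise sup norm is not submultiplicative, so borrow the operator norm, which makes the
matrices a normed algebra; derivatives only see the topology, which is the same. -/
theorem HasDerivWithinAt.matrix_mul (hu : HasDerivWithinAt u u' s x)
    (hv : HasDerivWithinAt v v' s x) :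
    HasDerivWithinAt (fun y => u y * v y) (u' * v x + u x * v') s x := by
  let _ := Matrix.linftyOpNormedRing (n := ι) (α := ℝ)
  let _ := Matrix.linftyOpNormedAlgebra (n := ι) (α := ℝ) (R := ℝ)
  exact hu.mul hv

theorem HasDerivWithinAt.mul_mul_transpose {L : Matrix ι ι ℝ}
    (hu : HasDerivWithinAt u (L * u x) s x) (B : Matrix ι ι ℝ) :
    HasDerivWithinAt (fun y => u y * B * (u y)ᵀ)
      (L * (u x * B * (u x)ᵀ) + u x * B * (u x)ᵀ * Lᵀ) s x := by
  convert (hu.matrix_mul (hasDerivWithinAt_const x s B)).matrix_mul hu.matrix_transpose using 1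
  simp only [transpose_mul, mul_zero, add_zero, mul_assoc]

theorem intervalIntegral_mul_add_mul_transpose (L : Matrix ι ι ℝ) {F : ℝ → Matrix ι ι ℝ}
    {a b : ℝ} (hF : ContinuousOn F (uIcc a b)) :
    ∫ τ in a..b, (L * F τ + F τ * Lᵀ) = L * (∫ τ in a..b, F τ) + (∫ τ in a..b, F τ) * Lᵀ :=
  (LinearMap.mulLeft ℝ L + LinearMap.mulRight ℝ Lᵀ).toContinuousLinearMap.intervalIntegral_comp_comm
    hF.intervalIntegrable

end MatrixCalculus

theorem dle_general_solution_general
    (n : ℕ) (t₀ Tf : ℝ)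
    (A M : ℝ → Matrix (Fin n) (Fin n) ℝ)
    (X₀ : Matrix (Fin n) (Fin n) ℝ)
    (hA : ContinuousOn A (Icc t₀ Tf))
    (hM : ContinuousOn M (Icc t₀ Tf))
    (Φ : ℝ → ℝ → Matrix (Fin n) (Fin n) ℝ)
    (hΦderiv : ∀ τ ∈ Icc t₀ Tf, ∀ t ∈ Icc t₀ Tf,
      HasDerivWithinAt (fun s => Φ s τ) (A t * Φ t τ) (Icc t₀ Tf) t)
    (hΦinit : ∀ τ, Φ τ τ = 1)
    (hΦcont : ContinuousOn (fun p : ℝ × ℝ => Φ p.1 p.2) (Icc t₀ Tf ×ˢ Icc t₀ Tf))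
    (X : ℝ → Matrix (Fin n) (Fin n) ℝ)
    (hX : ∀ t, X t = Φ t t₀ * X₀ * (Φ t t₀)ᵀ + ∫ τ in t₀..t, Φ t τ * M τ * (Φ t τ)ᵀ) :
    X t₀ = X₀ ∧
      ∀ t ∈ Icc t₀ Tf,
        HasDerivWithinAt X (A t * X t + X t * (A t)ᵀ + M t) (Icc t₀ Tf) t := by
  obtain rfl : X = fun t => Φ t t₀ * X₀ * (Φ t t₀)ᵀ + ∫ τ in t₀..t, Φ t τ * M τ * (Φ t τ)ᵀ :=
    funext hX
  refine ⟨by simp [hΦinit], fun t ht => ?_⟩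
  have ht₀ : t₀ ∈ Icc t₀ Tf := ⟨le_rfl, ht.1.trans ht.2⟩
  set F : ℝ → ℝ → Matrix (Fin n) (Fin n) ℝ := fun x τ => Φ x τ * M τ * (Φ x τ)ᵀ
  have hF : ContinuousOn (Function.uncurry F) (Icc t₀ Tf ×ˢ Icc t₀ Tf) :=
    (hΦcont.mul (hM.comp continuousOn_snd fun _ hp => hp.2)).mul
      (continuous_id.matrix_transpose.comp_continuousOn hΦcont)
  have hAfst : ContinuousOn (fun p : ℝ × ℝ => A p.1) (Icc t₀ Tf ×ˢ Icc t₀ Tf) :=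
    hA.comp continuousOn_fst fun _ hp => hp.1
  have hG : ContinuousOn (Function.uncurry fun x τ => A x * F x τ + F x τ * (A x)ᵀ)
      (Icc t₀ Tf ×ˢ Icc t₀ Tf) :=
    (hAfst.mul hF).add (hF.mul (continuous_id.matrix_transpose.comp_continuousOn hAfst))
  have hintegral := hasDerivWithinAt_intervalIntegral_leibniz hF hG
    (fun τ hτ x hx => (hΦderiv τ hτ x hx).mul_mul_transpose (M τ)) ht
  refine (((hΦderiv t₀ ht₀ t ht).mul_mul_transpose X₀).add hintegral).congr_deriv ?_
  rw [intervalIntegral_mul_add_mul_transpose (A t)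
    ((hF.uncurry_left t ht).mono (uIcc_subset_Icc ht₀ ht))]
  simp only [F, hΦinit, mul_one, one_mul, transpose_one, mul_add, add_mul]
  abel

/-- If `Φ` is a transition matrix for the time-dependent coefficient
`A : ℝ → ℝ^{n×n}`, then
`X t = Φ t t₀ * X₀ * (Φ t t₀)ᵀ + ∫_{t₀}^t Φ t τ * M τ * (Φ t τ)ᵀ dτ`
solves the differential Lyapunov equation `Ẋ = A X + X Aᵀ + M`, `X t₀ = X₀`, on `[t₀, T_f]`. -/
theorem dle_general_solution
    (n : ℕ) (hn : 0 < n) (t₀ Tf : ℝ) (ht : t₀ ≤ Tf)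
    (A M : ℝ → Matrix (Fin n) (Fin n) ℝ)
    (X₀ : Matrix (Fin n) (Fin n) ℝ)
    (hA : ContinuousOn A (Icc t₀ Tf))
    (hM : ContinuousOn M (Icc t₀ Tf))
    (Φ : ℝ → ℝ → Matrix (Fin n) (Fin n) ℝ)
    (hΦderiv : ∀ τ ∈ Icc t₀ Tf, ∀ t ∈ Icc t₀ Tf,
      HasDerivWithinAt (fun s => Φ s τ) (A t * Φ t τ) (Icc t₀ Tf) t)
    (hΦinit : ∀ τ, Φ τ τ = 1)
    (hΦcont : ContinuousOn (fun p : ℝ × ℝ => Φ p.1 p.2) (Icc t₀ Tf ×ˢ Icc t₀ Tf))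
    (hΦ'cont : ContinuousOn (fun p : ℝ × ℝ => A p.1 * Φ p.1 p.2) (Icc t₀ Tf ×ˢ Icc t₀ Tf))
    (X : ℝ → Matrix (Fin n) (Fin n) ℝ)
    (hX : ∀ t, X t = Φ t t₀ * X₀ * (Φ t t₀)ᵀ + ∫ τ in t₀..t, Φ t τ * M τ * (Φ t τ)ᵀ) :
    X t₀ = X₀ ∧
      ∀ t ∈ Icc t₀ Tf,
        HasDerivWithinAt X (A t * X t + X t * (A t)ᵀ + M t) (Icc t₀ Tf) t :=
  dle_general_solution_general n t₀ Tf A M X₀ hA hM Φ hΦderiv hΦinit hΦcont X hX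
end

section
/- Let A ∈ ℝ^{n×n}, B ∈ ℝ^{n×s}. Assume 𝒱 ∈ ℝ^{n×q} and V₊ ∈ ℝ^{n×d} satisfy 𝒱ᵀ𝒱 = I_q, V₊ᵀV₊ = I_d, 𝒱ᵀV₊ = 0, the Arnoldi relation A𝒱 = 𝒱𝒯 + V₊ T₊ Eᵀ with 𝒯 = 𝒱ᵀA𝒱, T₊ ∈ ℝ^{d×d} and E ∈ ℝ^{q×d} the last d columns of I_q, and B = 𝒱 B_m with B_m = 𝒱ᵀB. Let G : ℝ → ℝ^{q×q} be differentiable with G(t) symmetric for all t and Ġ(t) = 𝒯 G(t) + G(t) 𝒯ᵀ + B_m B_mᵀ, and set X_m(t) = 𝒱 G(t) 𝒱ᵀ. Then the residual R_m(t) = Ẋ_m(t) − A X_m(t) − X_m(t) Aᵀ − B Bᵀ has the explicit form R_m(t) = −( V₊ T₊ Ḡ(t) 𝒱ᵀ + 𝒱 Ḡ(t)ᵀ T₊ᵀ V₊ᵀ ), where Ḡ(t) = Eᵀ G(t) is the d×q matrix of the last d rows of G(t). -/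
open Matrix Set

attribute [local instance] Matrix.normedAddCommGroup Matrix.normedSpace

/-! Differentiating `X_m = 𝒱 G 𝒱ᵀ` gives `Ẋ_m = 𝒱 Ġ 𝒱ᵀ`. Substituting the projected equation for `Ġ`
and the Arnoldi relation `A𝒱 = 𝒱𝒯 + W` (with `W = V₊ T₊ Eᵀ`) for both `A X_m` and `X_m Aᵀ`, all the
`𝒯`- and `B_m`-terms cancel and only `-(W G 𝒱ᵀ + 𝒱 G Wᵀ)` survives; symmetry of `G` identifies
the second summand with the transpose of the first. -/

theorem HasDerivAt.matrix_const_mul_mul_const {𝕜 : Type*} [NontriviallyNormedField 𝕜]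
    [CompleteSpace 𝕜] {l m n p : Type*} [Fintype l] [Fintype m] [Fintype n] [Fintype p]
    {G : 𝕜 → Matrix m n 𝕜} {G' : Matrix m n 𝕜} {t : 𝕜} (hG : HasDerivAt G G' t)
    (L : Matrix l m 𝕜) (R : Matrix n p 𝕜) :
    HasDerivAt (fun u => L * G u * R) (L * G' * R) t :=
  (mulRightLinearMap l 𝕜 R ∘ₗ mulLeftLinearMap n 𝕜 L).toContinuousLinearMap.hasFDerivAt
    |>.comp_hasDerivAt t hG

theorem lyapunov_residual_eq_of_arnoldi {R : Type*} [CommRing R] {n q s : Type*} [Fintype n]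
    [Fintype q] [Fintype s] {A : Matrix n n R} {V W : Matrix n q R} {T : Matrix q q R}
    (hAV : A * V = V * T + W) (G : Matrix q q R) (Bm : Matrix q s R) :
    V * (T * G + G * Tᵀ + Bm * Bmᵀ) * Vᵀ - A * (V * G * Vᵀ) - V * G * Vᵀ * Aᵀ
        - V * Bm * (V * Bm)ᵀ = -(W * G * Vᵀ + V * G * Wᵀ) := by
  have hVA : Vᵀ * Aᵀ = Tᵀ * Vᵀ + Wᵀ := by
    rw [← transpose_mul, hAV, transpose_add, transpose_mul]
  have hAVG : A * (V * G * Vᵀ) = V * T * G * Vᵀ + W * G * Vᵀ := by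
    rw [← Matrix.mul_assoc, ← Matrix.mul_assoc, hAV, Matrix.add_mul, Matrix.add_mul]
  have hVGA : V * G * Vᵀ * Aᵀ = V * G * Tᵀ * Vᵀ + V * G * Wᵀ := by
    rw [Matrix.mul_assoc, hVA, Matrix.mul_add, ← Matrix.mul_assoc]
  rw [hAVG, hVGA, transpose_mul]
  simp only [Matrix.mul_add, Matrix.add_mul, Matrix.mul_assoc]
  abel

theorem residual_explicit_form_general
    (n s q d : ℕ)
    (A : Matrix (Fin n) (Fin n) ℝ) (B : Matrix (Fin n) (Fin s) ℝ)
    (V : Matrix (Fin n) (Fin q) ℝ) (Vp : Matrix (Fin n) (Fin d) ℝ)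
    (T : Matrix (Fin q) (Fin q) ℝ)
    (Tp : Matrix (Fin d) (Fin d) ℝ)
    (E : Matrix (Fin q) (Fin d) ℝ)
    (hArnoldi : A * V = V * T + Vp * Tp * Eᵀ)
    (Bm : Matrix (Fin q) (Fin s) ℝ) (hB : B = V * Bm)
    (G : ℝ → Matrix (Fin q) (Fin q) ℝ)
    (hGsymm : ∀ t, (G t)ᵀ = G t)
    (hG : ∀ t, HasDerivAt G (T * G t + G t * Tᵀ + Bm * Bmᵀ) t)
    (Xm : ℝ → Matrix (Fin n) (Fin n) ℝ) (hXm : ∀ t, Xm t = V * G t * Vᵀ)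
    (Xm' : ℝ → Matrix (Fin n) (Fin n) ℝ)
    (hXm' : ∀ t, HasDerivAt Xm (Xm' t) t)
    (R : ℝ → Matrix (Fin n) (Fin n) ℝ)
    (hR : ∀ t, R t = Xm' t - A * Xm t - Xm t * Aᵀ - B * Bᵀ) :
    ∀ t, R t = -(Vp * Tp * (Eᵀ * G t) * Vᵀ + V * (Eᵀ * G t)ᵀ * Tpᵀ * Vpᵀ) := by
  intro t
  have hXm'_eq : Xm' t = V * (T * G t + G t * Tᵀ + Bm * Bmᵀ) * Vᵀ := by
    rw [funext hXm] at hXm'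
    exact (hXm' t).unique ((hG t).matrix_const_mul_mul_const V Vᵀ)
  rw [hR t, hXm'_eq, hXm t, hB, lyapunov_residual_eq_of_arnoldi hArnoldi]
  simp only [transpose_mul, hGsymm t, Matrix.mul_assoc]

/-- Under the block Arnoldi relation `A𝒱 = 𝒱𝒯 + V₊ T₊ Eᵀ` (with orthonormality
`𝒱ᵀ𝒱 = I`, `V₊ᵀV₊ = I`, `𝒱ᵀV₊ = 0`, `B = 𝒱 B_m`), if `G` is a symmetric solution of the
projected equation `Ġ = 𝒯 G + G 𝒯ᵀ + B_m B_mᵀ` and `X_m = 𝒱 G 𝒱ᵀ`, then the residual has the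
explicit form `R_m(t) = −(V₊ T₊ Ḡ(t) 𝒱ᵀ + 𝒱 Ḡ(t)ᵀ T₊ᵀ V₊ᵀ)` with `Ḡ(t) = Eᵀ G(t)`. -/
theorem residual_explicit_form
    (n s q d : ℕ) (hn : 0 < n) (hs : 0 < s) (hq : 0 < q) (hd : 0 < d) (hdq : d ≤ q)
    (A : Matrix (Fin n) (Fin n) ℝ) (B : Matrix (Fin n) (Fin s) ℝ)
    (V : Matrix (Fin n) (Fin q) ℝ) (Vp : Matrix (Fin n) (Fin d) ℝ)
    (hV : Vᵀ * V = 1) (hVp : Vpᵀ * Vp = 1) (hVVp : Vᵀ * Vp = 0)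
    (T : Matrix (Fin q) (Fin q) ℝ) (hT : T = Vᵀ * A * V)
    (Tp : Matrix (Fin d) (Fin d) ℝ)
    (E : Matrix (Fin q) (Fin d) ℝ)
    (hE : ∀ i j, E i j = if (i : ℕ) = q - d + (j : ℕ) then 1 else 0)
    (hArnoldi : A * V = V * T + Vp * Tp * Eᵀ)
    (Bm : Matrix (Fin q) (Fin s) ℝ) (hBm : Bm = Vᵀ * B) (hB : B = V * Bm)
    (G : ℝ → Matrix (Fin q) (Fin q) ℝ)
    (hGsymm : ∀ t, (G t)ᵀ = G t)
    (hG : ∀ t, HasDerivAt G (T * G t + G t * Tᵀ + Bm * Bmᵀ) t)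
    (Xm : ℝ → Matrix (Fin n) (Fin n) ℝ) (hXm : ∀ t, Xm t = V * G t * Vᵀ)
    (Xm' : ℝ → Matrix (Fin n) (Fin n) ℝ)
    (hXm' : ∀ t, HasDerivAt Xm (Xm' t) t)
    (R : ℝ → Matrix (Fin n) (Fin n) ℝ)
    (hR : ∀ t, R t = Xm' t - A * Xm t - Xm t * Aᵀ - B * Bᵀ) :
    ∀ t, R t = -(Vp * Tp * (Eᵀ * G t) * Vᵀ + V * (Eᵀ * G t)ᵀ * Tpᵀ * Vpᵀ) :=
  residual_explicit_form_general n s q d A B V Vp T Tp E hArnoldi Bm hB G hGsymm hG Xm hXm Xm' hXm'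
    R hR
end

section
/- Let A ∈ ℝ^{n×n}, B ∈ ℝ^{n×s}. Assume 𝒱 ∈ ℝ^{n×q} and V₊ ∈ ℝ^{n×d} satisfy 𝒱ᵀ𝒱 = I_q, V₊ᵀV₊ = I_d, 𝒱ᵀV₊ = 0, the Arnoldi relation A𝒱 = 𝒱𝒯 + V₊ T₊ Eᵀ with 𝒯 = 𝒱ᵀA𝒱, T₊ ∈ ℝ^{d×d} and E ∈ ℝ^{q×d} the last d columns of I_q, and B = 𝒱 B_m with B_m = 𝒱ᵀB. Let G : ℝ → ℝ^{q×q} be differentiable with G(t) symmetric for all t and Ġ(t) = 𝒯 G(t) + G(t) 𝒯ᵀ + B_m B_mᵀ, and set X_m(t) = 𝒱 G(t) 𝒱ᵀ. Then the spectral norm of the residual R_m(t) = Ẋ_m(t) − A X_m(t) − X_m(t) Aᵀ − B Bᵀ satisfies ‖R_m(t)‖ = ‖T₊ Ḡ(t)‖ for all t, where Ḡ(t) = Eᵀ G(t) is the d×q matrix of the last d rows of G(t). -/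
open Matrix
open scoped Matrix.Norms.L2Operator

/-!
Substituting the Arnoldi relation and the projected equation, everything in the residual
cancels except `R = -(N + Nᵀ)` with `N = V₊ M 𝒱ᵀ` and `M = T₊ Eᵀ G`. Since `𝒱ᵀ V₊ = 0` we have
`N² = 0`, and in any C⋆-ring an element `a` with `a² = 0` satisfies `‖a + a⋆‖ = ‖a‖`: the
products `a⋆a` and `a a⋆` are self-adjoint and annihilate each other, so `‖(a + a⋆)²‖ =
‖a⋆a + a a⋆‖` is the larger of their norms, which is `‖a‖²` (the upper bound comes from the
`2ᵏ`-th powers, whose norms are exact for self-adjoint elements). Finally multiplication by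
matrices with orthonormal columns preserves the spectral norm, so `‖N‖ = ‖M‖`.
-/

theorem le_of_forall_pow_two_pow_le_mul_pow {x y c : ℝ} (hy : 0 ≤ y)
    (h : ∀ k : ℕ, x ^ 2 ^ k ≤ c * y ^ 2 ^ k) : x ≤ y := by
  by_contra! hyx
  have hx : 0 < x := hy.trans_lt hyx
  have hlim : Filter.Tendsto (fun k : ℕ => c * (y / x) ^ 2 ^ k) Filter.atTop (nhds (c * 0)) :=
    ((tendsto_pow_atTop_nhds_zero_of_lt_one (div_nonneg hy hx.le) ((div_lt_one hx).2 hyx)).comp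
      (tendsto_pow_atTop_atTop_of_one_lt one_lt_two)).const_mul c
  have hone : ∀ k : ℕ, 1 ≤ c * (y / x) ^ 2 ^ k := fun k => by
    rw [div_pow, ← mul_div_assoc, le_div_iff₀ (by positivity), one_mul]
    exact h k
  have := ge_of_tendsto' hlim hone
  rw [mul_zero] at this
  linarith

theorem add_pow_of_mul_eq_zero {R : Type*} [Semiring R] {a b : R} (hab : a * b = 0)
    (hba : b * a = 0) : ∀ {m : ℕ}, m ≠ 0 → (a + b) ^ m = a ^ m + b ^ m
  | 1, _ => by simp
  | m + 2, _ => by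
    have ha : a ^ (m + 1) * b = 0 := by rw [pow_succ, mul_assoc, hab, mul_zero]
    have hb : b ^ (m + 1) * a = 0 := by rw [pow_succ, mul_assoc, hba, mul_zero]
    rw [pow_succ, add_pow_of_mul_eq_zero hab hba m.succ_ne_zero, add_mul, mul_add, mul_add, ha, hb,
      ← pow_succ, ← pow_succ, add_zero, zero_add]

section CStarRing

variable {E : Type*} [NormedRing E] [StarRing E] [CStarRing E]

theorem IsSelfAdjoint.norm_add_le_max_of_mul_eq_zero {a b : E} (ha : IsSelfAdjoint a)
    (hb : IsSelfAdjoint b) (hab : a * b = 0) : ‖a + b‖ ≤ max ‖a‖ ‖b‖ := by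
  have hba : b * a = 0 := by simpa [ha.star_eq, hb.star_eq] using congr_arg star hab
  refine le_of_forall_pow_two_pow_le_mul_pow (c := 2) (le_max_of_le_left (norm_nonneg a))
    fun k => ?_
  calc ‖a + b‖ ^ 2 ^ k = ‖a ^ 2 ^ k + b ^ 2 ^ k‖ := by
        rw [← (ha.add hb).norm_pow_two_pow, add_pow_of_mul_eq_zero hab hba (by positivity)]
    _ ≤ ‖a‖ ^ 2 ^ k + ‖b‖ ^ 2 ^ k := by
        rw [← ha.norm_pow_two_pow, ← hb.norm_pow_two_pow]
        exact norm_add_le _ _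
    _ ≤ 2 * max ‖a‖ ‖b‖ ^ 2 ^ k := by
        have := pow_le_pow_left₀ (norm_nonneg a) (le_max_left ‖a‖ ‖b‖) (2 ^ k)
        have := pow_le_pow_left₀ (norm_nonneg b) (le_max_right ‖a‖ ‖b‖) (2 ^ k)
        linarith

theorem norm_add_star_eq_of_mul_self_eq_zero {a : E} (ha : a * a = 0) :
    ‖a + star a‖ = ‖a‖ := by
  have hsq : star (a + star a) * (a + star a) = star a * a + a * star a := by
    simp only [star_add, star_star, add_mul, mul_add, ha, ← star_mul, star_zero]
    abel
  apply le_antisymm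
  · have hle : ‖a + star a‖ * ‖a + star a‖ ≤ ‖a‖ * ‖a‖ := by
      rw [← CStarRing.norm_star_mul_self, hsq]
      refine (IsSelfAdjoint.norm_add_le_max_of_mul_eq_zero (.star_mul_self a)
        (.mul_star_self a) ?_).trans ?_
      · rw [mul_assoc, ← mul_assoc a, ha, zero_mul, mul_zero]
      · rw [CStarRing.norm_star_mul_self, CStarRing.norm_self_mul_star, max_self]
    exact (mul_self_le_mul_self_iff (norm_nonneg _) (norm_nonneg _)).2 hle
  · have hle : ‖a‖ * ‖a‖ ≤ ‖a + star a‖ * ‖a‖ :=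
      calc ‖a‖ * ‖a‖ = ‖(a + star a) * a‖ := by
            rw [add_mul, ha, zero_add, CStarRing.norm_star_mul_self]
        _ ≤ ‖a + star a‖ * ‖a‖ := norm_mul_le _ _
    rcases (norm_nonneg a).eq_or_lt with h0 | hpos
    · exact h0 ▸ norm_nonneg _
    · exact le_of_mul_le_mul_right hle hpos

end CStarRing

namespace Matrix

variable {𝕜 : Type*} [RCLike 𝕜] {k l m n : Type*} [Fintype k] [Fintype l] [Fintype m]
  [Fintype n]

theorem l2_opNorm_mul_of_conjTranspose_mul_self_eq_one [DecidableEq l] [DecidableEq n]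
    {W : Matrix m n 𝕜} (hW : Wᴴ * W = 1) (X : Matrix n l 𝕜) : ‖W * X‖ = ‖X‖ := by
  have hsq : ‖W * X‖ * ‖W * X‖ = ‖X‖ * ‖X‖ := by
    rw [← l2_opNorm_conjTranspose_mul_self, ← l2_opNorm_conjTranspose_mul_self,
      conjTranspose_mul, Matrix.mul_assoc, ← Matrix.mul_assoc Wᴴ, hW, Matrix.one_mul]
  exact (mul_self_inj_of_nonneg (norm_nonneg _) (norm_nonneg _)).1 hsq

theorem l2_opNorm_mul_conjTranspose_of_conjTranspose_mul_self_eq_one [DecidableEq l]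
    [DecidableEq m] [DecidableEq n] {W : Matrix m n 𝕜} (hW : Wᴴ * W = 1) (X : Matrix l n 𝕜) :
    ‖X * Wᴴ‖ = ‖X‖ := by
  rw [← l2_opNorm_conjTranspose, conjTranspose_mul, conjTranspose_conjTranspose,
    l2_opNorm_mul_of_conjTranspose_mul_self_eq_one hW, l2_opNorm_conjTranspose]

theorem _root_.HasDerivAt.matrix_const_mul_mul_const_s7 [DecidableEq l] [DecidableEq n]
    {f : 𝕜 → Matrix k n 𝕜} {f' : Matrix k n 𝕜} {t : 𝕜} (hf : HasDerivAt f f' t)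
    (P : Matrix m k 𝕜) (Q : Matrix n l 𝕜) :
    HasDerivAt (fun u => P * f u * Q) (P * f' * Q) t :=
  (mulRightLinearMap m 𝕜 Q ∘ₗ mulLeftLinearMap n 𝕜 P).toContinuousLinearMap.hasFDerivAt
    |>.comp_hasDerivAt t hf

end Matrix

theorem arnoldi_lyapunov_residual_eq {R : Type*} [CommRing R] {ι κ μ ν σ : Type*} [Fintype ι]
    [Fintype κ] [Fintype μ] [Fintype ν] [Fintype σ] {A : Matrix ι ι R} {B : Matrix ι σ R}
    {V : Matrix ι κ R} {Vp : Matrix ι μ R} {T : Matrix κ κ R} {Tp : Matrix μ ν R}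
    {E : Matrix κ ν R} {Bm : Matrix κ σ R} {G : Matrix κ κ R}
    (hArnoldi : A * V = V * T + Vp * Tp * Eᵀ) (hB : B = V * Bm) (hG : Gᵀ = G) :
    V * (T * G + G * Tᵀ + Bm * Bmᵀ) * Vᵀ - A * (V * G * Vᵀ) - V * G * Vᵀ * Aᵀ - B * Bᵀ =
      -(Vp * (Tp * (Eᵀ * G)) * Vᵀ + (Vp * (Tp * (Eᵀ * G)) * Vᵀ)ᵀ) := by
  have hAV : A * (V * G * Vᵀ) = (V * T + Vp * Tp * Eᵀ) * G * Vᵀ := by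
    rw [← hArnoldi, Matrix.mul_assoc, Matrix.mul_assoc, Matrix.mul_assoc]
  have hVA : V * G * Vᵀ * Aᵀ = V * G * (V * T + Vp * Tp * Eᵀ)ᵀ := by
    rw [← hArnoldi, transpose_mul, Matrix.mul_assoc]
  rw [hAV, hVA, hB]
  simp only [transpose_add, transpose_mul, transpose_transpose, hG, Matrix.mul_add,
    Matrix.add_mul, Matrix.mul_assoc]
  abel

theorem residual_norm_formula_general
    (n s q d : ℕ)
    (A : Matrix (Fin n) (Fin n) ℝ) (B : Matrix (Fin n) (Fin s) ℝ)
    (V : Matrix (Fin n) (Fin q) ℝ) (Vp : Matrix (Fin n) (Fin d) ℝ)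
    (hV : Vᵀ * V = 1) (hVp : Vpᵀ * Vp = 1) (hVVp : Vᵀ * Vp = 0)
    (T : Matrix (Fin q) (Fin q) ℝ)
    (Tp : Matrix (Fin d) (Fin d) ℝ)
    (E : Matrix (Fin q) (Fin d) ℝ)
    (hArnoldi : A * V = V * T + Vp * Tp * Eᵀ)
    (Bm : Matrix (Fin q) (Fin s) ℝ) (hB : B = V * Bm)
    (G : ℝ → Matrix (Fin q) (Fin q) ℝ)
    (hGsymm : ∀ t, (G t)ᵀ = G t)
    (hG : ∀ t, HasDerivAt G (T * G t + G t * Tᵀ + Bm * Bmᵀ) t)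
    (Xm : ℝ → Matrix (Fin n) (Fin n) ℝ) (hXm : ∀ t, Xm t = V * G t * Vᵀ)
    (Xm' : ℝ → Matrix (Fin n) (Fin n) ℝ)
    (hXm' : ∀ t, HasDerivAt Xm (Xm' t) t)
    (R : ℝ → Matrix (Fin n) (Fin n) ℝ)
    (hR : ∀ t, R t = Xm' t - A * Xm t - Xm t * Aᵀ - B * Bᵀ) :
    ∀ t, ‖R t‖ = ‖Tp * (Eᵀ * G t)‖ := by
  intro t
  have hXm't : Xm' t = V * (T * G t + G t * Tᵀ + Bm * Bmᵀ) * Vᵀ :=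
    (hXm' t).unique (funext hXm ▸ (hG t).matrix_const_mul_mul_const_s7 V Vᵀ)
  set N := Vp * (Tp * (Eᵀ * G t)) * Vᵀ with hN
  have hNN : N * N = 0 := by
    simp only [hN, Matrix.mul_assoc, ← Matrix.mul_assoc Vᵀ Vp, hVVp, Matrix.zero_mul,
      Matrix.mul_zero]
  have hNstar : star N = Nᵀ :=
    (star_eq_conjTranspose N).trans (conjTranspose_eq_transpose_of_trivial N)
  rw [hR, hXm't, hXm, arnoldi_lyapunov_residual_eq hArnoldi hB (hGsymm t), norm_neg, ← hNstar,
    norm_add_star_eq_of_mul_self_eq_zero hNN, hN, ← conjTranspose_eq_transpose_of_trivial V,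
    l2_opNorm_mul_conjTranspose_of_conjTranspose_mul_self_eq_one
      (by rwa [conjTranspose_eq_transpose_of_trivial]),
    l2_opNorm_mul_of_conjTranspose_mul_self_eq_one (by rwa [conjTranspose_eq_transpose_of_trivial])]

/-- Under the block Arnoldi relation `A𝒱 = 𝒱𝒯 + V₊ T₊ Eᵀ` (with orthonormality
`𝒱ᵀ𝒱 = I`, `V₊ᵀV₊ = I`, `𝒱ᵀV₊ = 0`, `B = 𝒱 B_m`), if `G` is a symmetric solution of the
projected equation `Ġ = 𝒯 G + G 𝒯ᵀ + B_m B_mᵀ` and `X_m = 𝒱 G 𝒱ᵀ`, then the spectral norm of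
the residual satisfies `‖R_m(t)‖ = ‖T₊ Ḡ(t)‖` with `Ḡ(t) = Eᵀ G(t)`. -/
theorem residual_norm_formula
    (n s q d : ℕ) (hn : 0 < n) (hs : 0 < s) (hq : 0 < q) (hd : 0 < d) (hdq : d ≤ q)
    (A : Matrix (Fin n) (Fin n) ℝ) (B : Matrix (Fin n) (Fin s) ℝ)
    (V : Matrix (Fin n) (Fin q) ℝ) (Vp : Matrix (Fin n) (Fin d) ℝ)
    (hV : Vᵀ * V = 1) (hVp : Vpᵀ * Vp = 1) (hVVp : Vᵀ * Vp = 0)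
    (T : Matrix (Fin q) (Fin q) ℝ) (hT : T = Vᵀ * A * V)
    (Tp : Matrix (Fin d) (Fin d) ℝ)
    (E : Matrix (Fin q) (Fin d) ℝ)
    (hE : ∀ i j, E i j = if (i : ℕ) = q - d + (j : ℕ) then 1 else 0)
    (hArnoldi : A * V = V * T + Vp * Tp * Eᵀ)
    (Bm : Matrix (Fin q) (Fin s) ℝ) (hBm : Bm = Vᵀ * B) (hB : B = V * Bm)
    (G : ℝ → Matrix (Fin q) (Fin q) ℝ)
    (hGsymm : ∀ t, (G t)ᵀ = G t)
    (hG : ∀ t, HasDerivAt G (T * G t + G t * Tᵀ + Bm * Bmᵀ) t)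
    (Xm : ℝ → Matrix (Fin n) (Fin n) ℝ) (hXm : ∀ t, Xm t = V * G t * Vᵀ)
    (Xm' : ℝ → Matrix (Fin n) (Fin n) ℝ)
    (hXm' : ∀ t, HasDerivAt Xm (Xm' t) t)
    (R : ℝ → Matrix (Fin n) (Fin n) ℝ)
    (hR : ∀ t, R t = Xm' t - A * Xm t - Xm t * Aᵀ - B * Bᵀ) :
    ∀ t, ‖R t‖ = ‖Tp * (Eᵀ * G t)‖ :=
  residual_norm_formula_general n s q d A B V Vp hV hVp hVVp T Tp E hArnoldi Bm hB G hGsymm hG Xm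
    hXm Xm' hXm' R hR
end

section
/- Let A ∈ ℝ^{n×n}, B ∈ ℝ^{n×s}. Assume 𝒱 ∈ ℝ^{n×q} and V₊ ∈ ℝ^{n×d} satisfy 𝒱ᵀ𝒱 = I_q, V₊ᵀV₊ = I_d, 𝒱ᵀV₊ = 0, the Arnoldi relation A𝒱 = 𝒱𝒯 + V₊ T₊ Eᵀ with 𝒯 = 𝒱ᵀA𝒱, T₊ ∈ ℝ^{d×d} and E ∈ ℝ^{q×d} the last d columns of I_q, and B = 𝒱 B_m with B_m = 𝒱ᵀB. Let G : ℝ → ℝ^{q×q} be differentiable with G(t) symmetric for all t and Ġ(t) = 𝒯 G(t) + G(t) 𝒯ᵀ + B_m B_mᵀ, and set X_m(t) = 𝒱 G(t) 𝒱ᵀ. Then X_m is the exact solution of the perturbed differential Lyapunov equation Ẋ_m(t) = (A − F) X_m(t) + X_m(t) (A − F)ᵀ + B Bᵀ, where F = V₊ T₊ Eᵀ 𝒱ᵀ. -/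
open Matrix Set

attribute [local instance] Matrix.normedAddCommGroup Matrix.normedSpace

/-- Under the block Arnoldi relation `A𝒱 = 𝒱𝒯 + V₊ T₊ Eᵀ` (with orthonormality
`𝒱ᵀ𝒱 = I`, `V₊ᵀV₊ = I`, `𝒱ᵀV₊ = 0`, `B = 𝒱 B_m`), if `G` is a symmetric solution of the
projected equation `Ġ = 𝒯 G + G 𝒯ᵀ + B_m B_mᵀ`, then `X_m = 𝒱 G 𝒱ᵀ` is an exact solution of
the perturbed equation `Ẋ_m = (A − F) X_m + X_m (A − F)ᵀ + B Bᵀ` with `F = V₊ T₊ Eᵀ 𝒱ᵀ`. -/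
theorem perturbed_dle
    (n s q d : ℕ) (hn : 0 < n) (hs : 0 < s) (hq : 0 < q) (hd : 0 < d) (hdq : d ≤ q)
    (A : Matrix (Fin n) (Fin n) ℝ) (B : Matrix (Fin n) (Fin s) ℝ)
    (V : Matrix (Fin n) (Fin q) ℝ) (Vp : Matrix (Fin n) (Fin d) ℝ)
    (hV : Vᵀ * V = 1) (hVp : Vpᵀ * Vp = 1) (hVVp : Vᵀ * Vp = 0)
    (T : Matrix (Fin q) (Fin q) ℝ) (hT : T = Vᵀ * A * V)
    (Tp : Matrix (Fin d) (Fin d) ℝ)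
    (E : Matrix (Fin q) (Fin d) ℝ)
    (hE : ∀ i j, E i j = if (i : ℕ) = q - d + (j : ℕ) then 1 else 0)
    (hArnoldi : A * V = V * T + Vp * Tp * Eᵀ)
    (Bm : Matrix (Fin q) (Fin s) ℝ) (hBm : Bm = Vᵀ * B) (hB : B = V * Bm)
    (G : ℝ → Matrix (Fin q) (Fin q) ℝ)
    (hGsymm : ∀ t, (G t)ᵀ = G t)
    (hG : ∀ t, HasDerivAt G (T * G t + G t * Tᵀ + Bm * Bmᵀ) t)
    (Xm : ℝ → Matrix (Fin n) (Fin n) ℝ) (hXm : ∀ t, Xm t = V * G t * Vᵀ)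
    (F : Matrix (Fin n) (Fin n) ℝ) (hF : F = Vp * Tp * Eᵀ * Vᵀ) :
    ∀ t, HasDerivAt Xm ((A - F) * Xm t + Xm t * (A - F)ᵀ + B * Bᵀ) t := by
  intro t
  have hXmfun : Xm = fun t => V * G t * Vᵀ := funext hXm
  have hAFV : (A - F) * V = V * T := by
    rw [hF, Matrix.sub_mul, hArnoldi]
    have h2 : Vp * Tp * Eᵀ * Vᵀ * V = Vp * Tp * Eᵀ := by
      rw [Matrix.mul_assoc (Vp * Tp * Eᵀ), hV, Matrix.mul_one]
    rw [h2, add_sub_cancel_right]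
  let L : Matrix (Fin q) (Fin q) ℝ →ₗ[ℝ] Matrix (Fin n) (Fin n) ℝ :=
    { toFun := fun X => V * X * Vᵀ
      map_add' := by intro X Y; simp [Matrix.mul_add, Matrix.add_mul]
      map_smul' := by intro c X; simp [Matrix.mul_smul, Matrix.smul_mul] }
  have key : HasDerivAt (fun t => V * G t * Vᵀ)
      (V * (T * G t + G t * Tᵀ + Bm * Bmᵀ) * Vᵀ) t := by
    have := (L.toContinuousLinearMap.hasFDerivAt).comp_hasDerivAt t (hG t)
    exact this
  rw [hXmfun]
  convert key using 1
  show (A - F) * (V * G t * Vᵀ) + (V * G t * Vᵀ) * (A - F)ᵀ + B * Bᵀ = _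
  rw [hB]
  have h1 : (A - F) * (V * G t * Vᵀ) = V * T * G t * Vᵀ := by
    rw [← Matrix.mul_assoc, ← Matrix.mul_assoc, hAFV]
  have h2 : V * G t * Vᵀ * (A - F)ᵀ = V * (G t * Tᵀ) * Vᵀ := by
    have : Vᵀ * (A - F)ᵀ = Tᵀ * Vᵀ := by
      rw [← Matrix.transpose_mul, hAFV, Matrix.transpose_mul]
    rw [Matrix.mul_assoc (V * G t), this]
    simp only [Matrix.mul_assoc]
  rw [h1, h2]
  simp only [Matrix.transpose_mul, Matrix.mul_add, Matrix.add_mul]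
  simp only [Matrix.mul_assoc]
end

section
/- Let A ∈ ℝ^{n×n}, B ∈ ℝ^{n×s}, 𝒱 ∈ ℝ^{n×q} with 𝒱ᵀ𝒱 = I_q, 𝒯 = 𝒱ᵀ A 𝒱 and B_m = 𝒱ᵀ B. For t ≥ t₀ define X(t) = ∫_{t₀}^t Z(τ) Z(τ)ᵀ dτ with Z(τ) = e^{(t−τ)A} B, and X_m(t) = ∫_{t₀}^t Z_m(τ) Z_m(τ)ᵀ dτ with Z_m(τ) = 𝒱 e^{(t−τ)𝒯} B_m. Then for all t ∈ [t₀,T_f]: ‖X(t) − X_m(t)‖ ≤ e^{t·μ₂(A)} ( ‖B‖ + ‖B_m‖ ) ∫_{t₀}^t e^{−τ·μ₂(A)} ‖ e^{(t−τ)A} B − 𝒱 e^{(t−τ)𝒯} B_m ‖ dτ. -/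
/-!
The error `Z Zᵀ - Z_m Z_mᵀ = (Z - Z_m) Zᵀ + Z_m (Z - Z_m)ᵀ` of the integrands is bounded by
`(‖Z‖ + ‖Z_m‖) ‖Z - Z_m‖`. Both factors `e^{sA}` and `e^{s𝒯}` are bounded by `e^{s μ₂(A)}`:
for a matrix `M` with `xᵀ M x ≤ c ‖x‖²`, the derivative of `‖e^{sM} x‖²` is
`2 (e^{sM} x)ᵀ M (e^{sM} x) ≤ 2c ‖e^{sM} x‖²`, so Grönwall gives `‖e^{sM}‖ ≤ e^{sc}`; and
`xᵀ A x ≤ μ₂(A) ‖x‖²` holds by the Rayleigh bound for `(A + Aᵀ)/2`, which the compression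
`𝒯 = 𝒱ᵀ A 𝒱` inherits because `𝒱` is an isometry.
-/

open Matrix Set intervalIntegral
open scoped Matrix.Norms.L2Operator RealInnerProductSpace

/-- The 2-logarithmic norm `μ₂(M) = (1/2)·λ_max(M + Mᵀ)` of a real square matrix. -/
noncomputable def mu2 {k : ℕ} (M : Matrix (Fin k) (Fin k) ℝ) : ℝ :=
  (1 / 2) * ⨆ i, (show (M + Mᵀ).IsHermitian by
    simpa [Matrix.conjTranspose_eq_transpose_of_trivial] using
      Matrix.isHermitian_add_transpose_self M).eigenvalues i

theorem continuous_exp_smul {𝔸 : Type*} [NormedRing 𝔸] [NormedAlgebra ℝ 𝔸] [CompleteSpace 𝔸]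
    (a : 𝔸) : Continuous fun τ : ℝ => NormedSpace.exp (τ • a) :=
  continuous_iff_continuousAt.2 fun τ => (hasDerivAt_exp_smul_const' a τ).continuousAt

theorem norm_exp_smul_le_of_inner_map_self_le {E : Type*} [NormedAddCommGroup E]
    [InnerProductSpace ℝ E] [CompleteSpace E] {L : E →L[ℝ] E} {c : ℝ}
    (hL : ∀ x, ⟪x, L x⟫ ≤ c * ‖x‖ ^ 2) {s : ℝ} (hs : 0 ≤ s) :
    ‖NormedSpace.exp (s • L)‖ ≤ Real.exp (s * c) := by
  refine ContinuousLinearMap.opNorm_le_bound _ (Real.exp_nonneg _) fun x => ?_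
  set f := fun τ : ℝ => NormedSpace.exp (τ • L) x
  have hf : ∀ τ, HasDerivAt f (L (f τ)) τ := fun τ => by
    simpa [f] using (hasDerivAt_exp_smul_const' L τ).clm_apply (hasDerivAt_const τ x)
  have hsq : ‖f s‖ ^ 2 ≤ ‖x‖ ^ 2 * Real.exp (2 * c * (s - 0)) :=
    le_gronwallBound_of_liminf_deriv_right_le (f := fun τ => ‖f τ‖ ^ 2)
      (fun τ _ => (hf τ).norm_sq.continuousAt.continuousWithinAt)
      (fun τ _ _ hr => (hf τ).norm_sq.hasDerivWithinAt.liminf_right_slope_le hr)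
      (by simp [f]) (fun τ _ => by nlinarith [hL (f τ)]) s ⟨hs, le_rfl⟩ |>.trans_eq
      (gronwallBound_ε0 _ _ _)
  have hrhs : ‖x‖ ^ 2 * Real.exp (2 * c * (s - 0)) = (Real.exp (s * c) * ‖x‖) ^ 2 := by
    rw [mul_pow, ← Real.exp_nat_mul]
    ring_nf
  exact (sq_le_sq₀ (norm_nonneg _) (by positivity)).1 (hsq.trans_eq hrhs)

namespace Matrix

variable {l m n : Type*} [Fintype l] [Fintype m] [Fintype n]

open scoped MatrixOrder in
theorem IsHermitian.dotProduct_mulVec_le_iSup_eigenvalues_mul [DecidableEq n] {S : Matrix n n ℝ}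
    (hS : S.IsHermitian) (x : n → ℝ) :
    x ⬝ᵥ (S *ᵥ x) ≤ (⨆ i, hS.eigenvalues i) * (x ⬝ᵥ x) := by
  have hle : S ≤ algebraMap ℝ _ (⨆ i, hS.eigenvalues i) := by
    refine le_algebraMap_of_spectrum_le ?_ hS
    rw [hS.spectrum_real_eq_range_eigenvalues]
    rintro _ ⟨i, rfl⟩
    exact le_ciSup (Set.finite_range _).bddAbove i
  simpa [sub_mulVec, dotProduct_sub, Algebra.algebraMap_eq_smul_one, smul_mulVec] using
    (le_iff.mp hle).dotProduct_mulVec_nonneg x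

theorem dotProduct_mulVec_le_mu2_mul {k : ℕ} (M : Matrix (Fin k) (Fin k) ℝ) (x : Fin k → ℝ) :
    x ⬝ᵥ (M *ᵥ x) ≤ mu2 M * (x ⬝ᵥ x) := by
  have hS : (M + Mᵀ).IsHermitian := by
    simpa [conjTranspose_eq_transpose_of_trivial] using isHermitian_add_transpose_self M
  have hsym : x ⬝ᵥ ((M + Mᵀ) *ᵥ x) = 2 * (x ⬝ᵥ (M *ᵥ x)) := by
    rw [add_mulVec, dotProduct_add, dotProduct_mulVec x Mᵀ, vecMul_transpose, dotProduct_comm]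
    ring
  have hmu2 : mu2 M = 1 / 2 * ⨆ i, hS.eigenvalues i := rfl
  rw [hmu2]
  linarith [hS.dotProduct_mulVec_le_iSup_eigenvalues_mul x]

theorem dotProduct_mulVec_transpose_mul_mul_le_mu2_mul {k : ℕ} (A : Matrix (Fin k) (Fin k) ℝ)
    [DecidableEq n] {V : Matrix (Fin k) n ℝ} (hV : Vᵀ * V = 1) (x : n → ℝ) :
    x ⬝ᵥ ((Vᵀ * A * V) *ᵥ x) ≤ mu2 A * (x ⬝ᵥ x) := by
  have hVx : (V *ᵥ x) ⬝ᵥ (V *ᵥ x) = x ⬝ᵥ x := by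
    rw [dotProduct_mulVec, ← mulVec_transpose, mulVec_mulVec, hV, one_mulVec, dotProduct_comm]
  calc x ⬝ᵥ ((Vᵀ * A * V) *ᵥ x) = (V *ᵥ x) ⬝ᵥ (A *ᵥ (V *ᵥ x)) := by
        rw [← mulVec_mulVec, ← mulVec_mulVec, dotProduct_mulVec x Vᵀ, vecMul_transpose]
    _ ≤ mu2 A * (x ⬝ᵥ x) := hVx ▸ dotProduct_mulVec_le_mu2_mul A (V *ᵥ x)

theorem norm_exp_smul_le_of_dotProduct_mulVec_le [DecidableEq n] {M : Matrix n n ℝ} {c : ℝ}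
    (hM : ∀ x, x ⬝ᵥ (M *ᵥ x) ≤ c * (x ⬝ᵥ x)) {s : ℝ} (hs : 0 ≤ s) :
    ‖NormedSpace.exp (s • M)‖ ≤ Real.exp (s * c) := by
  have hcont : Continuous (toEuclideanCLM (n := n) (𝕜 := ℝ)) :=
    (toEuclideanCLM (n := n) (𝕜 := ℝ)).toAlgEquiv.toLinearMap.continuous_of_finiteDimensional
  have hsM : s • M ∈ Metric.eball 0 (NormedSpace.expSeries ℝ (Matrix n n ℝ)).radius := by
    simp [NormedSpace.expSeries_radius_eq_top]
  rw [← l2_opNorm_toEuclideanCLM, NormedSpace.map_exp_of_mem_ball _ hcont _ hsM, map_smul]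
  refine norm_exp_smul_le_of_inner_map_self_le (fun x => ?_) hs
  rw [inner_toEuclideanCLM, ← real_inner_self_eq_norm_sq, EuclideanSpace.inner_eq_star_dotProduct]
  simpa [dotProduct_comm] using hM x.ofLp

theorem l2_opNorm_transpose [DecidableEq m] [DecidableEq n] (P : Matrix m n ℝ) :
    ‖Pᵀ‖ = ‖P‖ := by
  rw [← conjTranspose_eq_transpose_of_trivial, l2_opNorm_conjTranspose]

theorem l2_opNorm_mul_of_transpose_mul_self_eq_one [DecidableEq n] [DecidableEq l]
    {V : Matrix m n ℝ} (hV : Vᵀ * V = 1) (P : Matrix n l ℝ) : ‖V * P‖ = ‖P‖ := by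
  have h : (V * P)ᴴ * (V * P) = Pᴴ * P := by
    simp only [conjTranspose_eq_transpose_of_trivial, transpose_mul]
    rw [Matrix.mul_assoc, ← Matrix.mul_assoc Vᵀ, hV, Matrix.one_mul]
  have := l2_opNorm_conjTranspose_mul_self (V * P)
  rw [h, l2_opNorm_conjTranspose_mul_self] at this
  exact (mul_self_inj (norm_nonneg _) (norm_nonneg _)).mp this.symm

theorem l2_opNorm_mul_transpose_sub_mul_transpose_le [DecidableEq m] [DecidableEq n]
    (P Q : Matrix m n ℝ) : ‖P * Pᵀ - Q * Qᵀ‖ ≤ (‖P‖ + ‖Q‖) * ‖P - Q‖ := by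
  have hsplit : P * Pᵀ - Q * Qᵀ = (P - Q) * Pᵀ + Q * (P - Q)ᵀ := by
    rw [Matrix.sub_mul, transpose_sub, Matrix.mul_sub]
    abel
  calc ‖P * Pᵀ - Q * Qᵀ‖ ≤ ‖P - Q‖ * ‖Pᵀ‖ + ‖Q‖ * ‖(P - Q)ᵀ‖ :=
        hsplit ▸ norm_add_le_of_le (l2_opNorm_mul _ _) (l2_opNorm_mul _ _)
    _ = (‖P‖ + ‖Q‖) * ‖P - Q‖ := by
        rw [l2_opNorm_transpose, l2_opNorm_transpose]
        ring

theorem l2_opNorm_integral_mul_transpose_sub_le [DecidableEq m] [DecidableEq n] {a b : ℝ}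
    (hab : a ≤ b) {P Q : ℝ → Matrix m n ℝ} (hP : Continuous P) (hQ : Continuous Q) {w : ℝ → ℝ}
    (hw : Continuous w) {p q : ℝ} (hPw : ∀ τ ∈ Icc a b, ‖P τ‖ ≤ w τ * p)
    (hQw : ∀ τ ∈ Icc a b, ‖Q τ‖ ≤ w τ * q) :
    ‖(∫ τ in a..b, P τ * (P τ)ᵀ) - ∫ τ in a..b, Q τ * (Q τ)ᵀ‖ ≤
      (p + q) * ∫ τ in a..b, w τ * ‖P τ - Q τ‖ := by
  have hPP : Continuous fun τ => P τ * (P τ)ᵀ := hP.matrix_mul hP.matrix_transpose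
  have hQQ : Continuous fun τ => Q τ * (Q τ)ᵀ := hQ.matrix_mul hQ.matrix_transpose
  rw [← integral_sub (hPP.intervalIntegrable _ _) (hQQ.intervalIntegrable _ _),
    ← integral_const_mul]
  refine (norm_integral_le_integral_norm hab).trans <| integral_mono_on hab
    ((hPP.sub hQQ).norm.intervalIntegrable _ _)
    ((continuous_const.mul (hw.mul (hP.sub hQ).norm)).intervalIntegrable _ _) fun τ hτ => ?_
  calc ‖P τ * (P τ)ᵀ - Q τ * (Q τ)ᵀ‖ ≤ (‖P τ‖ + ‖Q τ‖) * ‖P τ - Q τ‖ :=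
        l2_opNorm_mul_transpose_sub_mul_transpose_le _ _
    _ ≤ (w τ * p + w τ * q) * ‖P τ - Q τ‖ :=
        mul_le_mul_of_nonneg_right (add_le_add (hPw τ hτ) (hQw τ hτ)) (norm_nonneg _)
    _ = (p + q) * (w τ * ‖P τ - Q τ‖) := by ring

end Matrix

theorem error_bound_general_general
    (n s q : ℕ)
    (t₀ Tf : ℝ)
    (A : Matrix (Fin n) (Fin n) ℝ) (B : Matrix (Fin n) (Fin s) ℝ)
    (V : Matrix (Fin n) (Fin q) ℝ) (hV : Vᵀ * V = 1)
    (T : Matrix (Fin q) (Fin q) ℝ) (hT : T = Vᵀ * A * V)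
    (Bm : Matrix (Fin q) (Fin s) ℝ)
    (X Xm : ℝ → Matrix (Fin n) (Fin n) ℝ)
    (hX : ∀ t, X t =
      ∫ τ in t₀..t,
        (NormedSpace.exp ((t - τ) • A) * B) * (NormedSpace.exp ((t - τ) • A) * B)ᵀ)
    (hXm : ∀ t, Xm t =
      ∫ τ in t₀..t,
        (V * NormedSpace.exp ((t - τ) • T) * Bm) *
          (V * NormedSpace.exp ((t - τ) • T) * Bm)ᵀ) :
    ∀ t ∈ Icc t₀ Tf,
      ‖X t - Xm t‖ ≤
        Real.exp (t * mu2 A) * (‖B‖ + ‖Bm‖) *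
          ∫ τ in t₀..t,
            Real.exp (-τ * mu2 A) *
              ‖NormedSpace.exp ((t - τ) • A) * B -
                V * NormedSpace.exp ((t - τ) • T) * Bm‖ := by
  rintro t ⟨ht₀, -⟩
  have hlag : Continuous fun τ : ℝ => t - τ := continuous_const.sub continuous_id
  have hZ : Continuous fun τ => NormedSpace.exp ((t - τ) • A) * B :=
    ((continuous_exp_smul A).comp hlag).matrix_mul continuous_const
  have hZm : Continuous fun τ => V * NormedSpace.exp ((t - τ) • T) * Bm :=
    (continuous_const.matrix_mul ((continuous_exp_smul T).comp hlag)).matrix_mul continuous_const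
  have hZ_le : ∀ τ ∈ Icc t₀ t,
      ‖NormedSpace.exp ((t - τ) • A) * B‖ ≤ Real.exp ((t - τ) * mu2 A) * ‖B‖ := fun τ hτ =>
    (l2_opNorm_mul _ _).trans <| mul_le_mul_of_nonneg_right
      (norm_exp_smul_le_of_dotProduct_mulVec_le (dotProduct_mulVec_le_mu2_mul A)
        (sub_nonneg.2 hτ.2)) (norm_nonneg _)
  have hZm_le : ∀ τ ∈ Icc t₀ t,
      ‖V * NormedSpace.exp ((t - τ) • T) * Bm‖ ≤ Real.exp ((t - τ) * mu2 A) * ‖Bm‖ := by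
    intro τ hτ
    rw [Matrix.mul_assoc, l2_opNorm_mul_of_transpose_mul_self_eq_one hV]
    exact (l2_opNorm_mul _ _).trans <| mul_le_mul_of_nonneg_right
      (norm_exp_smul_le_of_dotProduct_mulVec_le
        (hT ▸ dotProduct_mulVec_transpose_mul_mul_le_mu2_mul A hV) (sub_nonneg.2 hτ.2))
      (norm_nonneg _)
  rw [hX, hXm]
  refine (l2_opNorm_integral_mul_transpose_sub_le ht₀ hZ hZm (by fun_prop) hZ_le hZm_le).trans_eq
    ?_
  rw [mul_comm (Real.exp _), mul_assoc, ← integral_const_mul (Real.exp (t * mu2 A))]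
  congr 1
  refine intervalIntegral.integral_congr fun τ _ => ?_
  simp only [← mul_assoc, ← Real.exp_add]
  ring_nf

/-- With `X(t) = ∫_{t₀}^t Z(τ)Z(τ)ᵀ dτ`, `Z(τ) = e^{(t−τ)A}B`, and
`X_m(t) = ∫_{t₀}^t Z_m(τ)Z_m(τ)ᵀ dτ`, `Z_m(τ) = 𝒱 e^{(t−τ)𝒯} B_m`, `𝒯 = 𝒱ᵀA𝒱`, `B_m = 𝒱ᵀB`,
`𝒱ᵀ𝒱 = I`, one has, for `t ∈ [t₀,T_f]`,
`‖X(t) − X_m(t)‖ ≤ e^{tμ₂(A)}(‖B‖+‖B_m‖) ∫_{t₀}^t e^{−τμ₂(A)} ‖e^{(t−τ)A}B − 𝒱e^{(t−τ)𝒯}B_m‖ dτ`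
(spectral norms). -/
theorem error_bound_general
    (n s q : ℕ) (hn : 0 < n) (hs : 0 < s) (hq : 0 < q)
    (t₀ Tf : ℝ) (ht : t₀ ≤ Tf)
    (A : Matrix (Fin n) (Fin n) ℝ) (B : Matrix (Fin n) (Fin s) ℝ)
    (V : Matrix (Fin n) (Fin q) ℝ) (hV : Vᵀ * V = 1)
    (T : Matrix (Fin q) (Fin q) ℝ) (hT : T = Vᵀ * A * V)
    (Bm : Matrix (Fin q) (Fin s) ℝ) (hBm : Bm = Vᵀ * B)
    (X Xm : ℝ → Matrix (Fin n) (Fin n) ℝ)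
    (hX : ∀ t, X t =
      ∫ τ in t₀..t,
        (NormedSpace.exp ((t - τ) • A) * B) * (NormedSpace.exp ((t - τ) • A) * B)ᵀ)
    (hXm : ∀ t, Xm t =
      ∫ τ in t₀..t,
        (V * NormedSpace.exp ((t - τ) • T) * Bm) *
          (V * NormedSpace.exp ((t - τ) • T) * Bm)ᵀ) :
    ∀ t ∈ Icc t₀ Tf,
      ‖X t - Xm t‖ ≤
        Real.exp (t * mu2 A) * (‖B‖ + ‖Bm‖) *
          ∫ τ in t₀..t,
            Real.exp (-τ * mu2 A) *
              ‖NormedSpace.exp ((t - τ) • A) * B -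
                V * NormedSpace.exp ((t - τ) • T) * Bm‖ :=
  error_bound_general_general n s q t₀ Tf A B V hV T hT Bm X Xm hX hXm
end

section
/- Let A ∈ ℝ^{n×n}, B ∈ ℝ^{n×s}, 𝒱 ∈ ℝ^{n×q} with 𝒱ᵀ𝒱 = I_q, 𝒯 = 𝒱ᵀ A 𝒱 and B_m = 𝒱ᵀ B. Then for every s ≥ 0, ‖ 𝒱 e^{s𝒯} B_m ‖ ≤ e^{s·μ₂(A)} ‖B_m‖, where the middle step uses that multiplication by 𝒱 preserves the spectral norm and that ‖e^{s𝒯}‖ ≤ e^{s·μ₂(𝒯)} ≤ e^{s·μ₂(A)}. -/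
/-! `V` has orthonormal columns, so `‖V X‖ ≤ ‖X‖` and `‖V x‖ = ‖x‖`. The latter carries the
Rayleigh bound `xᵀ A x ≤ μ₂(A) ‖x‖²` over to the compression `T = Vᵀ A V`. Along
`y(t) = e^{tT} x` this gives `(‖y‖²)' = 2 yᵀ T y ≤ 2 μ₂(A) ‖y‖²`, so `e^{-2 μ₂(A) t} ‖y(t)‖²` is
nonincreasing and `‖e^{cT}‖ ≤ e^{c μ₂(A)}` for `c ≥ 0`. -/

open Matrix Set
open scoped Matrix.Norms.L2Operator

open scoped InnerProductSpace MatrixOrder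

theorem norm_le_exp_mul_of_hasDerivAt_of_inner_le {E : Type*} [NormedAddCommGroup E]
    [InnerProductSpace ℝ E] {y y' : ℝ → E} {μ c : ℝ}
    (hy : ∀ t, HasDerivAt y (y' t) t) (hμ : ∀ t, ⟪y t, y' t⟫_ℝ ≤ μ * ‖y t‖ ^ 2) (hc : 0 ≤ c) :
    ‖y c‖ ≤ Real.exp (c * μ) * ‖y 0‖ := by
  set g : ℝ → ℝ := fun t => Real.exp (-(2 * μ) * t) * ‖y t‖ ^ 2
  have hg (t : ℝ) : HasDerivAt g
      (Real.exp (-(2 * μ) * t) * (2 * ⟪y t, y' t⟫_ℝ - 2 * μ * ‖y t‖ ^ 2)) t := by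
    have hexp : HasDerivAt (fun t => Real.exp (-(2 * μ) * t))
        (Real.exp (-(2 * μ) * t) * -(2 * μ)) t := by
      simpa using ((hasDerivAt_id t).const_mul (-(2 * μ))).exp
    exact (hexp.mul (hy t).norm_sq).congr_deriv (by ring)
  have hg_anti : Antitone g := antitone_of_deriv_nonpos (fun t => (hg t).differentiableAt)
    fun t => (hg t).deriv ▸ mul_nonpos_of_nonneg_of_nonpos (Real.exp_pos _).le (by linarith [hμ t])
  have hdecay : Real.exp (-(2 * μ) * c) * ‖y c‖ ^ 2 ≤ ‖y 0‖ ^ 2 := by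
    simpa [g] using hg_anti hc
  refine (pow_le_pow_iff_left₀ (norm_nonneg _) (by positivity) two_ne_zero).mp ?_
  calc ‖y c‖ ^ 2 = Real.exp (2 * μ * c) * (Real.exp (-(2 * μ) * c) * ‖y c‖ ^ 2) := by
        rw [← mul_assoc, ← Real.exp_add, neg_mul, add_neg_cancel, Real.exp_zero, one_mul]
    _ ≤ Real.exp (2 * μ * c) * ‖y 0‖ ^ 2 := by gcongr
    _ = (Real.exp (c * μ) * ‖y 0‖) ^ 2 := by rw [mul_pow, ← Real.exp_nat_mul]; ring_nf

theorem ContinuousLinearMap.norm_exp_smul_le {E : Type*} [NormedAddCommGroup E]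
    [InnerProductSpace ℝ E] [CompleteSpace E] {M : E →L[ℝ] E} {μ : ℝ}
    (hM : ∀ v, ⟪v, M v⟫_ℝ ≤ μ * ‖v‖ ^ 2) {c : ℝ} (hc : 0 ≤ c) :
    ‖NormedSpace.exp (c • M)‖ ≤ Real.exp (c * μ) := by
  refine opNorm_le_bound _ (Real.exp_pos _).le fun x => ?_
  have hy (t : ℝ) : HasDerivAt (fun t : ℝ => NormedSpace.exp (t • M) x)
      (M (NormedSpace.exp (t • M) x)) t :=
    (apply ℝ E x).hasFDerivAt.comp_hasDerivAt t (hasDerivAt_exp_smul_const' M t)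
  simpa using norm_le_exp_mul_of_hasDerivAt_of_inner_le hy (fun t => hM _) hc

namespace Matrix

variable {m n p : Type*} [Fintype m] [Fintype n] [Fintype p]

theorem toEuclideanCLM_exp {𝕜 : Type*} [RCLike 𝕜] [DecidableEq n] (M : Matrix n n 𝕜) :
    toEuclideanCLM (n := n) (𝕜 := 𝕜) (NormedSpace.exp M) =
      NormedSpace.exp (toEuclideanCLM (n := n) (𝕜 := 𝕜) M) :=
  NormedSpace.map_exp_of_mem_ball (𝕂 := 𝕜) _
    (AddMonoidHomClass.isometry_of_norm _ fun M => (cstar_norm_def M).symm).continuous M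
    ((NormedSpace.expSeries_radius_eq_top 𝕜 (Matrix n n 𝕜)).symm ▸ edist_lt_top _ _)

theorem dotProduct_mulVec_le_of_eigenvalues_le [DecidableEq n] {H : Matrix n n ℝ}
    (hH : H.IsHermitian) {μ : ℝ} (hμ : ∀ i, hH.eigenvalues i ≤ μ) (x : n → ℝ) :
    x ⬝ᵥ (H *ᵥ x) ≤ μ * (x ⬝ᵥ x) := by
  have hle : H ≤ algebraMap ℝ _ μ := le_algebraMap_of_spectrum_le (by
    rw [hH.spectrum_real_eq_range_eigenvalues]
    rintro _ ⟨i, rfl⟩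
    exact hμ i) hH
  have := (le_iff.mp hle).dotProduct_mulVec_nonneg x
  simp only [Algebra.algebraMap_eq_smul_one, sub_mulVec, smul_mulVec, one_mulVec, dotProduct_sub,
    dotProduct_smul, star_trivial, smul_eq_mul] at this
  linarith

theorem dotProduct_transpose_mul_mul_mulVec (V : Matrix m n ℝ) (A : Matrix m m ℝ) (x : n → ℝ) :
    x ⬝ᵥ ((Vᵀ * A * V) *ᵥ x) = (V *ᵥ x) ⬝ᵥ (A *ᵥ (V *ᵥ x)) := by
  rw [Matrix.mul_assoc, ← mulVec_mulVec, dotProduct_mulVec, vecMul_transpose, mulVec_mulVec]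

theorem dotProduct_transpose_mul_mul_mulVec_le [DecidableEq n] {V : Matrix m n ℝ}
    (hV : Vᵀ * V = 1) {A : Matrix m m ℝ} {μ : ℝ} (hA : ∀ y, y ⬝ᵥ (A *ᵥ y) ≤ μ * (y ⬝ᵥ y))
    (x : n → ℝ) :
    x ⬝ᵥ ((Vᵀ * A * V) *ᵥ x) ≤ μ * (x ⬝ᵥ x) := by
  have hVx : (V *ᵥ x) ⬝ᵥ (V *ᵥ x) = x ⬝ᵥ x := by
    rw [← dotProduct_transpose_mulVec, mulVec_mulVec, hV, one_mulVec]
  rw [dotProduct_transpose_mul_mul_mulVec, ← hVx]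
  exact hA _

theorem l2_opNorm_mul_le_of_transpose_mul_self_eq_one [DecidableEq n] [DecidableEq p]
    {V : Matrix m n ℝ} (hV : Vᵀ * V = 1) (X : Matrix n p ℝ) : ‖V * X‖ ≤ ‖X‖ := by
  have hV_le : ‖V‖ ≤ 1 := by
    have h : ‖V‖ * ‖V‖ ≤ 1 := by
      rw [← l2_opNorm_conjTranspose_mul_self, conjTranspose_eq_transpose_of_trivial, hV,
        cstar_norm_def, map_one]
      exact ContinuousLinearMap.norm_id_le
    nlinarith [norm_nonneg V]
  calc ‖V * X‖ ≤ ‖V‖ * ‖X‖ := l2_opNorm_mul V X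
    _ ≤ ‖X‖ := mul_le_of_le_one_left (norm_nonneg X) hV_le

theorem l2_opNorm_exp_smul_le [DecidableEq n] {M : Matrix n n ℝ} {μ : ℝ}
    (hM : ∀ x, x ⬝ᵥ (M *ᵥ x) ≤ μ * (x ⬝ᵥ x)) {c : ℝ} (hc : 0 ≤ c) :
    ‖NormedSpace.exp (c • M)‖ ≤ Real.exp (c * μ) := by
  rw [cstar_norm_def, toEuclideanCLM_exp, map_smul]
  refine ContinuousLinearMap.norm_exp_smul_le (fun v => ?_) hc
  rw [← real_inner_self_eq_norm_sq, EuclideanSpace.inner_eq_star_dotProduct,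
    EuclideanSpace.inner_eq_star_dotProduct, ofLp_toEuclideanCLM, star_trivial, dotProduct_comm]
  exact hM _

end Matrix

theorem dotProduct_mulVec_le_mu2 {k : ℕ} (A : Matrix (Fin k) (Fin k) ℝ) (x : Fin k → ℝ) :
    x ⬝ᵥ (A *ᵥ x) ≤ mu2 A * (x ⬝ᵥ x) := by
  have hH : (A + Aᵀ).IsHermitian := by
    simpa [conjTranspose_eq_transpose_of_trivial] using isHermitian_add_transpose_self A
  have hμ (i : Fin k) : hH.eigenvalues i ≤ 2 * mu2 A := by
    rw [mu2]; ring_nf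
    exact le_ciSup (Set.finite_range _).bddAbove i
  have := dotProduct_mulVec_le_of_eigenvalues_le hH hμ x
  rw [add_mulVec, dotProduct_add, dotProduct_transpose_mulVec A x x] at this
  linarith

theorem projected_exp_norm_bound_general
    (n s q : ℕ)
    (A : Matrix (Fin n) (Fin n) ℝ)
    (V : Matrix (Fin n) (Fin q) ℝ) (hV : Vᵀ * V = 1)
    (T : Matrix (Fin q) (Fin q) ℝ) (hT : T = Vᵀ * A * V)
    (Bm : Matrix (Fin q) (Fin s) ℝ) :
    ∀ c : ℝ, 0 ≤ c →
      ‖V * NormedSpace.exp (c • T) * Bm‖ ≤ Real.exp (c * mu2 A) * ‖Bm‖ := by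
  intro c hc
  have hT_quad : ∀ x, x ⬝ᵥ (T *ᵥ x) ≤ mu2 A * (x ⬝ᵥ x) :=
    hT ▸ dotProduct_transpose_mul_mul_mulVec_le hV (dotProduct_mulVec_le_mu2 A)
  calc ‖V * NormedSpace.exp (c • T) * Bm‖ ≤ ‖NormedSpace.exp (c • T) * Bm‖ := by
        rw [Matrix.mul_assoc]; exact l2_opNorm_mul_le_of_transpose_mul_self_eq_one hV _
    _ ≤ ‖NormedSpace.exp (c • T)‖ * ‖Bm‖ := l2_opNorm_mul _ _
    _ ≤ Real.exp (c * mu2 A) * ‖Bm‖ := by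
        gcongr; exact l2_opNorm_exp_smul_le hT_quad hc

/-- If `𝒱ᵀ𝒱 = I_q`, `𝒯 = 𝒱ᵀ A 𝒱`, `B_m = 𝒱ᵀ B`, then for every `c ≥ 0`,
`‖𝒱 e^{c𝒯} B_m‖ ≤ e^{c μ₂(A)} ‖B_m‖` in the spectral norm. -/
theorem projected_exp_norm_bound
    (n s q : ℕ) (hn : 0 < n) (hs : 0 < s) (hq : 0 < q)
    (A : Matrix (Fin n) (Fin n) ℝ) (B : Matrix (Fin n) (Fin s) ℝ)
    (V : Matrix (Fin n) (Fin q) ℝ) (hV : Vᵀ * V = 1)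
    (T : Matrix (Fin q) (Fin q) ℝ) (hT : T = Vᵀ * A * V)
    (Bm : Matrix (Fin q) (Fin s) ℝ) (hBm : Bm = Vᵀ * B) :
    ∀ c : ℝ, 0 ≤ c →
      ‖V * NormedSpace.exp (c • T) * Bm‖ ≤ Real.exp (c * mu2 A) * ‖Bm‖ :=
  projected_exp_norm_bound_general n s q A V hV T hT Bm
end

section
/- Let A ∈ ℝ^{n×n}, B ∈ ℝ^{n×s}, and let 𝒱 ∈ ℝ^{n×q} satisfy 𝒱ᵀ𝒱 = I_q and have column space equal to the block Krylov subspace 𝕂_m(A,B), the span of all columns of B, AB, …, A^{m−1}B. Set 𝒯 = 𝒱ᵀ A 𝒱, B_m = 𝒱ᵀ B and ρ = ‖A‖. Then ‖ e^{A} B − 𝒱 e^{𝒯} B_m ‖ ≤ 2 ‖B‖ · ρ^m e^{ρ} / m!. -/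
/-!
Since `V Vᵀ` is the orthogonal projector onto `𝕂_m(A,B)` and `Vᵀ V = 1`, induction on `k` gives
`V Tᵏ B_m = Aᵏ B` for every `k < m`: the two exponential series agree in their first `m` terms.
Each remaining term is at most `2 ‖B‖ ρᵏ / k!` because `‖V‖ ≤ 1` forces `‖T‖ ≤ ρ` and
`‖B_m‖ ≤ ‖B‖`, and `ρ^(k+m) / (k+m)! ≤ (ρ^m / m!) (ρᵏ / k!)` bounds the tail by `ρ^m e^ρ / m!`.
-/

open Matrix
open scoped Nat Matrix.Norms.L2Operator

theorem HasSum.matrix_mul_left {ι R l m n : Type*} [Fintype m] [NonUnitalNonAssocSemiring R]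
    [TopologicalSpace R] [IsTopologicalSemiring R] {f : ι → Matrix m n R} {M : Matrix m n R}
    (hf : HasSum f M) (V : Matrix l m R) : HasSum (fun i => V * f i) (V * M) :=
  hf.map (addMonoidHomMulLeft V) (continuous_const.matrix_mul continuous_id)

theorem HasSum.matrix_mul_right {ι R l m n : Type*} [Fintype m] [NonUnitalNonAssocSemiring R]
    [TopologicalSpace R] [IsTopologicalSemiring R] {f : ι → Matrix l m R} {M : Matrix l m R}
    (hf : HasSum f M) (B : Matrix m n R) : HasSum (fun i => f i * B) (M * B) :=
  hf.map (addMonoidHomMulRight B) (continuous_id.matrix_mul continuous_const)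

theorem norm_le_of_hasSum_inv_factorial_smul {E : Type*} [NormedAddCommGroup E]
    [NormedSpace ℝ E] {f : ℕ → E} {S : E} {C ρ : ℝ} {m : ℕ}
    (hS : HasSum (fun k => (k ! : ℝ)⁻¹ • f k) S) (hlow : ∀ k < m, f k = 0)
    (hf : ∀ k, ‖f k‖ ≤ C * ρ ^ k) :
    ‖S‖ ≤ C * (ρ ^ m * Real.exp ρ / m !) := by
  have htail : HasSum (fun k => ((k + m) ! : ℝ)⁻¹ • f (k + m)) S := by
    have hhead : ∑ k ∈ Finset.range m, (k ! : ℝ)⁻¹ • f k = 0 :=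
      Finset.sum_eq_zero fun k hk => by rw [hlow k (Finset.mem_range.mp hk), smul_zero]
    rwa [← hasSum_nat_add_iff' m, hhead, sub_zero] at hS
  have hexp :
      HasSum (fun k => C * ρ ^ m / m ! * (ρ ^ k / k !)) (C * ρ ^ m / m ! * Real.exp ρ) := by
    rw [Real.exp_eq_exp_ℝ]
    exact (NormedSpace.expSeries_div_hasSum_exp ρ).mul_left _
  refine (htail.norm_le_of_bounded hexp fun k => ?_).trans_eq (by ring)
  have hCρ : 0 ≤ C * ρ ^ (k + m) := (norm_nonneg _).trans (hf _)
  have hfact : (k ! * m ! : ℝ) ≤ (k + m) ! := by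
    exact_mod_cast Nat.le_of_dvd (Nat.factorial_pos _)
      (Nat.factorial_mul_factorial_dvd_factorial_add k m)
  calc ‖((k + m) ! : ℝ)⁻¹ • f (k + m)‖ ≤ C * ρ ^ (k + m) / (k + m) ! := by
        rw [norm_smul, norm_inv, Real.norm_natCast, inv_mul_eq_div]
        gcongr
        exact hf _
    _ ≤ C * ρ ^ (k + m) / (k ! * m !) := div_le_div_of_nonneg_left hCρ (by positivity) hfact
    _ = C * ρ ^ m / m ! * (ρ ^ k / k !) := by rw [pow_add]; ring

namespace Matrix

section Krylov

variable {R : Type*} [CommSemiring R] {n p q : Type*} [Fintype q]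

theorem exists_mul_eq_of_col_mem_range {V : Matrix n q R} {M : Matrix n p R}
    (h : ∀ j, (fun i => M i j) ∈ LinearMap.range V.mulVecLin) : ∃ X : Matrix q p R, V * X = M := by
  choose y hy using h
  refine ⟨(of y)ᵀ, ?_⟩
  ext i j
  exact congrFun (hy j) i

variable [Fintype n] [DecidableEq q]

theorem mul_mul_eq_self_of_col_mem_range {V : Matrix n q R} {W : Matrix q n R}
    {M : Matrix n p R} (hWV : W * V = 1) (h : ∀ j, (fun i => M i j) ∈ LinearMap.range V.mulVecLin) :
    V * (W * M) = M := by
  obtain ⟨X, rfl⟩ := exists_mul_eq_of_col_mem_range h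
  rw [← Matrix.mul_assoc W, hWV, Matrix.one_mul]

variable [DecidableEq n]

def krylovSpace (A : Matrix n n R) (B : Matrix n p R) (m : ℕ) : Submodule R (n → R) :=
  Submodule.span R {v : n → R | ∃ k < m, ∃ j : p, v = fun i => (A ^ k * B) i j}

theorem mul_pow_mul_eq_pow_mul_of_krylovSpace_le {A : Matrix n n R} {B : Matrix n p R}
    {V : Matrix n q R} {W : Matrix q n R} {m : ℕ} (hWV : W * V = 1)
    (hK : krylovSpace A B m ≤ LinearMap.range V.mulVecLin) {k : ℕ} (hk : k < m) :
    V * ((W * A * V) ^ k * (W * B)) = A ^ k * B := by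
  have hproj : ∀ k < m, V * (W * (A ^ k * B)) = A ^ k * B := fun k hk =>
    mul_mul_eq_self_of_col_mem_range hWV fun j => hK (Submodule.subset_span ⟨k, hk, j, rfl⟩)
  induction k with
  | zero => simpa using hproj 0 hk
  | succ k ih =>
    calc V * ((W * A * V) ^ (k + 1) * (W * B))
        = V * (W * (A * (V * ((W * A * V) ^ k * (W * B))))) := by
          rw [pow_succ']; simp only [Matrix.mul_assoc]
      _ = A ^ (k + 1) * B := by
          rw [ih (by omega), ← Matrix.mul_assoc A, ← pow_succ', hproj _ hk]

end Krylov

section L2OpNorm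

variable {𝕜 : Type*} [RCLike 𝕜] {n p q : Type*} [Fintype n] [Fintype p] [Fintype q]
  [DecidableEq p] [DecidableEq q]

theorem l2_opNorm_one_le : ‖(1 : Matrix q q 𝕜)‖ ≤ 1 := by
  have h := l2_opNorm_conjTranspose_mul_self (1 : Matrix q q 𝕜)
  rw [conjTranspose_one, Matrix.one_mul] at h
  nlinarith [norm_nonneg (1 : Matrix q q 𝕜)]

theorem l2_opNorm_le_one_of_conjTranspose_mul_self_eq_one {V : Matrix n q 𝕜}
    (hV : Vᴴ * V = 1) : ‖V‖ ≤ 1 := by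
  have h := l2_opNorm_conjTranspose_mul_self V
  rw [hV] at h
  nlinarith [norm_nonneg V, l2_opNorm_one_le (q := q) (𝕜 := 𝕜)]

theorem l2_opNorm_pow_mul_le [DecidableEq n] (A : Matrix n n 𝕜) (B : Matrix n p 𝕜) (k : ℕ) :
    ‖A ^ k * B‖ ≤ ‖A‖ ^ k * ‖B‖ := by
  induction k with
  | zero => simp
  | succ k ih =>
    calc ‖A ^ (k + 1) * B‖ ≤ ‖A‖ * ‖A ^ k * B‖ := by
          rw [pow_succ', Matrix.mul_assoc]; exact l2_opNorm_mul _ _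
      _ ≤ ‖A‖ ^ (k + 1) * ‖B‖ := by
          rw [pow_succ', mul_assoc]; gcongr

theorem l2_opNorm_conjTranspose_mul_le {V : Matrix n q 𝕜} (hV : Vᴴ * V = 1)
    (B : Matrix n p 𝕜) : ‖Vᴴ * B‖ ≤ ‖B‖ := by
  classical
  calc ‖Vᴴ * B‖ ≤ ‖Vᴴ‖ * ‖B‖ := l2_opNorm_mul _ _
    _ ≤ ‖B‖ := by
      rw [l2_opNorm_conjTranspose]
      exact mul_le_of_le_one_left (norm_nonneg _)
        (l2_opNorm_le_one_of_conjTranspose_mul_self_eq_one hV)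

theorem l2_opNorm_conjTranspose_mul_mul_le [DecidableEq n] {V : Matrix n q 𝕜} (hV : Vᴴ * V = 1)
    (A : Matrix n n 𝕜) : ‖Vᴴ * A * V‖ ≤ ‖A‖ :=
  calc ‖Vᴴ * A * V‖ ≤ ‖Vᴴ * A‖ * ‖V‖ := l2_opNorm_mul _ _
    _ ≤ ‖A‖ * 1 := mul_le_mul (l2_opNorm_conjTranspose_mul_le hV A)
        (l2_opNorm_le_one_of_conjTranspose_mul_self_eq_one hV) (norm_nonneg _) (norm_nonneg _)
    _ = ‖A‖ := mul_one _

theorem l2_opNorm_pow_mul_sub_le [DecidableEq n] {V : Matrix n q 𝕜} (hV : Vᴴ * V = 1)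
    (A : Matrix n n 𝕜) (B : Matrix n p 𝕜) (k : ℕ) :
    ‖A ^ k * B - V * ((Vᴴ * A * V) ^ k * (Vᴴ * B))‖ ≤ 2 * ‖B‖ * ‖A‖ ^ k := by
  have hcompressed : ‖V * ((Vᴴ * A * V) ^ k * (Vᴴ * B))‖ ≤ ‖A‖ ^ k * ‖B‖ :=
    calc ‖V * ((Vᴴ * A * V) ^ k * (Vᴴ * B))‖ ≤ ‖V‖ * (‖Vᴴ * A * V‖ ^ k * ‖Vᴴ * B‖) :=
          (l2_opNorm_mul _ _).trans (by gcongr; exact l2_opNorm_pow_mul_le _ _ k)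
      _ ≤ 1 * (‖A‖ ^ k * ‖B‖) := by
          gcongr
          exacts [l2_opNorm_le_one_of_conjTranspose_mul_self_eq_one hV,
            l2_opNorm_conjTranspose_mul_mul_le hV A, l2_opNorm_conjTranspose_mul_le hV B]
      _ = ‖A‖ ^ k * ‖B‖ := one_mul _
  calc _ ≤ ‖A ^ k * B‖ + ‖V * ((Vᴴ * A * V) ^ k * (Vᴴ * B))‖ := norm_sub_le _ _
    _ ≤ ‖A‖ ^ k * ‖B‖ + ‖A‖ ^ k * ‖B‖ := add_le_add (l2_opNorm_pow_mul_le A B k) hcompressed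
    _ = 2 * ‖B‖ * ‖A‖ ^ k := by ring

end L2OpNorm

theorem hasSum_exp_mul {𝕜 : Type*} [RCLike 𝕜] {n p : Type*} [Fintype n] [DecidableEq n]
    (A : Matrix n n 𝕜) (B : Matrix n p 𝕜) :
    HasSum (fun k => (k !⁻¹ : 𝕜) • (A ^ k * B)) (NormedSpace.exp A * B) := by
  simpa only [smul_mul] using (NormedSpace.exp_series_hasSum_exp' (𝕂 := 𝕜) A).matrix_mul_right B

end Matrix

theorem krylov_exp_approx_bound_general
    (n s q m : ℕ)
    (A : Matrix (Fin n) (Fin n) ℝ) (B : Matrix (Fin n) (Fin s) ℝ)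
    (V : Matrix (Fin n) (Fin q) ℝ) (hV : Vᵀ * V = 1)
    (hrange : LinearMap.range (Matrix.mulVecLin V) =
      Submodule.span ℝ
        {v : Fin n → ℝ | ∃ k < m, ∃ j : Fin s, v = fun i => (A ^ k * B) i j})
    (T : Matrix (Fin q) (Fin q) ℝ) (hT : T = Vᵀ * A * V)
    (Bm : Matrix (Fin q) (Fin s) ℝ) (hBm : Bm = Vᵀ * B) :
    ‖NormedSpace.exp A * B - V * NormedSpace.exp T * Bm‖ ≤
      2 * ‖B‖ * (‖A‖ ^ m * Real.exp ‖A‖ / (Nat.factorial m)) := by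
  rw [← conjTranspose_eq_transpose_of_trivial] at hV hT hBm
  subst hT hBm
  refine norm_le_of_hasSum_inv_factorial_smul
    (f := fun k => A ^ k * B - V * ((Vᴴ * A * V) ^ k * (Vᴴ * B))) ?_ ?_
    (l2_opNorm_pow_mul_sub_le hV A B)
  · have hsum := (hasSum_exp_mul A B).sub
      ((hasSum_exp_mul (Vᴴ * A * V) (Vᴴ * B)).matrix_mul_left V)
    simpa only [smul_sub, Matrix.mul_smul, Matrix.mul_assoc] using hsum
  · intro k hk
    rw [mul_pow_mul_eq_pow_mul_of_krylovSpace_le hV hrange.ge hk, sub_self]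

/-- If the columns of `𝒱` form an orthonormal basis of the block Krylov
subspace `𝕂_m(A,B) = span(columns of B, AB, …, A^{m−1}B)`, with `𝒯 = 𝒱ᵀ A 𝒱`, `B_m = 𝒱ᵀ B`
and `ρ = ‖A‖`, then `‖e^A B − 𝒱 e^𝒯 B_m‖ ≤ 2 ‖B‖ ρ^m e^ρ / m!` (spectral norms). -/
theorem krylov_exp_approx_bound
    (n s q m : ℕ) (hn : 0 < n) (hs : 0 < s) (hq : 0 < q) (hm : 0 < m)
    (A : Matrix (Fin n) (Fin n) ℝ) (B : Matrix (Fin n) (Fin s) ℝ)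
    (V : Matrix (Fin n) (Fin q) ℝ) (hV : Vᵀ * V = 1)
    (hrange : LinearMap.range (Matrix.mulVecLin V) =
      Submodule.span ℝ
        {v : Fin n → ℝ | ∃ k < m, ∃ j : Fin s, v = fun i => (A ^ k * B) i j})
    (T : Matrix (Fin q) (Fin q) ℝ) (hT : T = Vᵀ * A * V)
    (Bm : Matrix (Fin q) (Fin s) ℝ) (hBm : Bm = Vᵀ * B) :
    ‖NormedSpace.exp A * B - V * NormedSpace.exp T * Bm‖ ≤
      2 * ‖B‖ * (‖A‖ ^ m * Real.exp ‖A‖ / (Nat.factorial m)) :=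
  krylov_exp_approx_bound_general n s q m A B V hV hrange T hT Bm hBm
end
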